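/- arXiv:1903.08001 — 3 statements merged into one kernel-verified Lean document; each statement's English description precedes it below -/
import Mathlib

section
/- Let γ : [1, ∞) → ℝⁿ be a C¹ curve such that |γ(t)| → ∞ as t → ∞, and suppose that both γ(t)/|γ(t)| and γ'(t)/|γ'(t)| converge as t → ∞ (as happens automatically for definable arcs in an o-minimal structure). If moreover γ is parametrized so that |γ(t)| = t for all t, then the two limits coincide: lim γ(t)/|γ(t)| = lim γ'(t)/|γ'(t)|. -/
/-!
Differentiating `‖γ t‖² = t²` gives `⟪γ t, γ' t⟫ = t`, so by Cauchy–Schwarz `‖γ' t‖ ≥ 1`.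
Hence, with `v` the limit direction of `γ'`, the derivative `⟪γ' t, v⟫ = ‖γ' t‖ ⟪γ' t / ‖γ' t‖, v⟫`
of `f t = ⟪γ t, v⟫` is eventually larger than any `K < 1`, which forces
`⟪u, v⟫ = lim f t / t ≥ 1`. Since `u` and `v` are unit vectors, `u = v`.
-/

open Filter Topology

open scoped RealInnerProductSpace

theorem le_of_tendsto_div_self_of_le_deriv {f f' : ℝ → ℝ} {K L : ℝ}
    (hf : ∀ᶠ t in atTop, HasDerivAt f (f' t) t) (hK : ∀ᶠ t in atTop, K ≤ f' t)
    (hL : Tendsto (fun t => f t / t) atTop (𝓝 L)) : K ≤ L := by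
  obtain ⟨T, hT⟩ := (hf.and hK).exists_forall_of_atTop
  have hgrowth : ∀ t ∈ Set.Ici T, T ≤ t → K * (t - T) ≤ f t - f T := by
    refine (convex_Ici T).mul_sub_le_image_sub_of_le_deriv ?_ ?_ ?_ T Set.self_mem_Ici
    · exact fun t ht => (hT t ht).1.continuousAt.continuousWithinAt
    · rw [interior_Ici]
      exact fun t ht => (hT t (le_of_lt ht)).1.differentiableAt.differentiableWithinAt
    · rw [interior_Ici]
      intro t ht
      rw [(hT t (le_of_lt ht)).1.deriv]
      exact (hT t (le_of_lt ht)).2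
  have hlower : Tendsto (fun t => K + (f T - K * T) / t) atTop (𝓝 K) := by
    simpa using (tendsto_const_nhds (x := K)).add
      ((tendsto_const_nhds (x := f T - K * T)).div_atTop tendsto_id)
  refine le_of_tendsto_of_tendsto hlower hL ?_
  filter_upwards [eventually_ge_atTop T, eventually_gt_atTop 0] with t hTt ht
  rw [add_div' _ _ _ ht.ne', div_le_div_iff_of_pos_right ht]
  linarith [hgrowth t hTt hTt]

section InnerProductSpace

variable {E : Type*} [NormedAddCommGroup E] [InnerProductSpace ℝ E]

theorem norm_eq_one_of_tendsto_inv_norm_smul {α : Type*} {l : Filter α} [l.NeBot]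
    {x : α → E} {u : E} (hx : ∀ᶠ a in l, x a ≠ 0)
    (hu : Tendsto (fun a => ‖x a‖⁻¹ • x a) l (𝓝 u)) : ‖u‖ = 1 :=
  tendsto_nhds_unique hu.norm <| tendsto_const_nhds.congr' <|
    hx.mono fun _ ha => (norm_smul_inv_norm (𝕜 := ℝ) ha).symm

theorem eventually_lt_inner_of_tendsto_inv_norm_smul {α : Type*} {l : Filter α}
    {x : α → E} {v : E} (hv : ‖v‖ = 1) (hx : ∀ᶠ a in l, 1 ≤ ‖x a‖)
    (hdir : Tendsto (fun a => ‖x a‖⁻¹ • x a) l (𝓝 v)) {K : ℝ} (hK : K < 1) :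
    ∀ᶠ a in l, K < ⟪x a, v⟫ := by
  have hinner : Tendsto (fun a => ⟪‖x a‖⁻¹ • x a, v⟫) l (𝓝 1) := by
    simpa [real_inner_self_eq_norm_sq, hv] using hdir.inner (𝕜 := ℝ) (tendsto_const_nhds (x := v))
  filter_upwards [hx, hinner.eventually (lt_mem_nhds (max_lt hK one_pos))] with a hxa ha
  have hpos : 0 < ‖x a‖ := one_pos.trans_le hxa
  have hsplit : ⟪x a, v⟫ = ‖x a‖ * ⟪‖x a‖⁻¹ • x a, v⟫ := by
    rw [real_inner_smul_left, mul_inv_cancel_left₀ hpos.ne']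
  rw [hsplit]
  calc K ≤ max K 0 := le_max_left _ _
    _ < ⟪‖x a‖⁻¹ • x a, v⟫ := ha
    _ ≤ ‖x a‖ * ⟪‖x a‖⁻¹ • x a, v⟫ := le_mul_of_one_le_left ((le_max_right K 0).trans ha.le) hxa

theorem inner_eq_of_norm_eq_self {γ : ℝ → E} {γ't : E} {t : ℝ} (hγ : HasDerivAt γ γ't t)
    (hnorm : ∀ᶠ s in 𝓝 t, ‖γ s‖ = s) : ⟪γ t, γ't⟫ = t := by
  have hpow : HasDerivAt (· ^ 2) (2 * t) t := by simpa using hasDerivAt_pow 2 t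
  have hsq : HasDerivAt (fun s => ‖γ s‖ ^ 2) (2 * t) t := by
    refine hpow.congr_of_eventuallyEq ?_
    filter_upwards [hnorm] with s hs
    rw [hs]
  have := hγ.norm_sq.unique hsq
  linarith

theorem one_le_norm_of_norm_eq_self {γ : ℝ → E} {γ't : E} {t : ℝ} (ht : 0 < t)
    (hγ : HasDerivAt γ γ't t) (hnorm : ∀ᶠ s in 𝓝 t, ‖γ s‖ = s) : 1 ≤ ‖γ't‖ := by
  have hcs : t ≤ t * ‖γ't‖ := by
    calc t = ⟪γ t, γ't⟫ := (inner_eq_of_norm_eq_self hγ hnorm).symm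
      _ ≤ ‖γ t‖ * ‖γ't‖ := real_inner_le_norm _ _
      _ = t * ‖γ't‖ := by rw [hnorm.self_of_nhds]
  exact le_of_mul_le_mul_left (by linarith) ht

end InnerProductSpace

theorem stmt_0_general (n : ℕ) (γ γ' : ℝ → EuclideanSpace ℝ (Fin n))
    (hderiv : ∀ t, 1 ≤ t → HasDerivAt γ (γ' t) t)
    (hparam : ∀ t, 1 ≤ t → ‖γ t‖ = t)
    (u v : EuclideanSpace ℝ (Fin n))
    (hu : Tendsto (fun t => ‖γ t‖⁻¹ • γ t) atTop (nhds u))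
    (hv : Tendsto (fun t => ‖γ' t‖⁻¹ • γ' t) atTop (nhds v)) :
    u = v := by
  have hγ' : ∀ᶠ t in atTop, 1 ≤ ‖γ' t‖ := by
    filter_upwards [eventually_gt_atTop 1] with t ht
    exact one_le_norm_of_norm_eq_self (one_pos.trans ht) (hderiv t ht.le)
      (mem_of_superset (lt_mem_nhds ht) fun s hs => hparam s (le_of_lt hs))
  have hu1 : ‖u‖ = 1 := norm_eq_one_of_tendsto_inv_norm_smul (by
    filter_upwards [eventually_ge_atTop 1] with t ht
    rw [← norm_pos_iff, hparam t ht]; linarith) hu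
  have hv1 : ‖v‖ = 1 :=
    norm_eq_one_of_tendsto_inv_norm_smul (hγ'.mono fun t ht => norm_pos_iff.mp (by linarith)) hv
  have hslope : Tendsto (fun t => ⟪γ t, v⟫ / t) atTop (𝓝 ⟪u, v⟫) := by
    refine (hu.inner tendsto_const_nhds).congr' ?_
    filter_upwards [eventually_ge_atTop 1] with t ht
    rw [real_inner_smul_left, hparam t ht, inv_mul_eq_div]
  have hge : 1 ≤ ⟪u, v⟫ := le_of_forall_lt_imp_le_of_dense fun K hK =>
    le_of_tendsto_div_self_of_le_deriv
      ((eventually_ge_atTop 1).mono fun t ht => (hderiv t ht).inner ℝ (hasDerivAt_const t v))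
      ((eventually_lt_inner_of_tendsto_inv_norm_smul hv1 hγ' hv hK).mono fun _ h => by
        simpa using h.le) hslope
  have hle : ⟪u, v⟫ ≤ 1 := by simpa [hu1, hv1] using real_inner_le_norm u v
  exact (inner_eq_one_iff_of_norm_eq_one hu1 hv1).mp (le_antisymm hle hge)

/-- For a `C¹` curve `γ : [1, ∞) → ℝⁿ` going to infinity, parametrized so that
`‖γ t‖ = t`, if both `γ t / ‖γ t‖` and `γ' t / ‖γ' t‖` converge at infinity, then
the two limits coincide. -/
theorem stmt_0 (n : ℕ) (γ γ' : ℝ → EuclideanSpace ℝ (Fin n))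
    (hderiv : ∀ t, 1 ≤ t → HasDerivAt γ (γ' t) t)
    (hcont : ContinuousOn γ' (Set.Ici (1:ℝ)))
    (hinfty : Tendsto (fun t => ‖γ t‖) atTop atTop)
    (hparam : ∀ t, 1 ≤ t → ‖γ t‖ = t)
    (u v : EuclideanSpace ℝ (Fin n))
    (hu : Tendsto (fun t => ‖γ t‖⁻¹ • γ t) atTop (nhds u))
    (hv : Tendsto (fun t => ‖γ' t‖⁻¹ • γ' t) atTop (nhds v)) :
    u = v :=
  stmt_0_general n γ γ' hderiv hparam u v hu hv
end

section
/- Let p : (0,1) → ℝⁿ × ℝ, p(s) = (x(s), t(s)) be a C¹ curve with |x(s)| = 1/s, and suppose there are unit vectors v ∈ ℝⁿ, and vectors ν^x(s) ∈ ℝⁿ × {0}, scalars ν^t(s), with asymptotic expansions x(s) = s^{−1}v + o(s^{−1}), x'(s) = −s^{−2}v + o(s^{−2}), t(s) = c + A s^a + o(s^a) with A ≠ 0, a > 0, t'(s) = s^{a−1}(Aa + o(1)), ν^x(s) = s^e ν^x₀ + o(s^e) with ν^x₀ ≠ 0, ν^t(s) = s^f ν^t₀ + o(s^f), and the tangency relation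 ⟨ν^x(s), x'(s)⟩ + ν^t(s)·t'(s) = 0 for all s. If moreover the Malgrange condition |x(s)|·|ν^x(s)| ≥ A_c > 0 fails to be violated (i.e. holds, so e ≤ 1), then ⟨ν^x₀, v⟩ = 0. -/
open Filter
open scoped RealInnerProductSpace

/-- Malgrange condition forces the limit horizontal normal to be orthogonal to the
direction at infinity, along a curve `p(s) = (x(s), t(s))` on `M` with the stated
asymptotic expansions (`l` is the filter `s → 0⁺`, `o(s^k)` is expressed by
convergence of the rescaled quantities). -/
theorem stmt_7 (n : ℕ) (c A Ac a e f : ℝ) (νx₀ : EuclideanSpace ℝ (Fin n))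
    (νt₀ : ℝ) (v : EuclideanSpace ℝ (Fin n))
    (x x' : ℝ → EuclideanSpace ℝ (Fin n)) (t t' νt : ℝ → ℝ)
    (νx : ℝ → EuclideanSpace ℝ (Fin n))
    (hv : ‖v‖ = 1) (hA : A ≠ 0) (ha : 0 < a) (hf : 0 ≤ f)
    (hx_deriv : ∀ s ∈ Set.Ioo (0:ℝ) 1, HasDerivAt x (x' s) s)
    (ht_deriv : ∀ s ∈ Set.Ioo (0:ℝ) 1, HasDerivAt t (t' s) s)
    (hnorm : ∀ s ∈ Set.Ioo (0:ℝ) 1, ‖x s‖ = 1 / s)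
    -- x(s) = s⁻¹ v + o(s⁻¹)
    (hx : Tendsto (fun s => s • x s) (nhdsWithin 0 (Set.Ioi 0)) (nhds v))
    -- x'(s) = -s⁻² v + o(s⁻²)
    (hx' : Tendsto (fun s => (s ^ (2:ℝ)) • x' s) (nhdsWithin 0 (Set.Ioi 0)) (nhds (-v)))
    -- t(s) = c + A s^a + o(s^a)
    (ht : Tendsto (fun s => (t s - c) / s ^ a) (nhdsWithin 0 (Set.Ioi 0)) (nhds A))
    -- t'(s) = s^(a-1) (A a + o(1))
    (ht' : Tendsto (fun s => t' s / s ^ (a - 1)) (nhdsWithin 0 (Set.Ioi 0)) (nhds (A * a)))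
    -- ν^x(s) = s^e νx₀ + o(s^e), νx₀ ≠ 0
    (hνx : Tendsto (fun s => (s ^ (-e)) • νx s) (nhdsWithin 0 (Set.Ioi 0)) (nhds νx₀))
    (hνx₀ : νx₀ ≠ 0)
    -- ν^t(s) = s^f νt₀ + o(s^f)
    (hνt : Tendsto (fun s => νt s / s ^ f) (nhdsWithin 0 (Set.Ioi 0)) (nhds νt₀))
    -- tangency relation ⟪ν^x, x'⟫ + ν^t · t' = 0
    (htan : ∀ s ∈ Set.Ioo (0:ℝ) 1, ⟪νx s, x' s⟫ + νt s * t' s = 0)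
    -- Malgrange condition |x|·|ν^x| ≥ A_c > 0, so that e ≤ 1
    (hAc : 0 < Ac)
    (hMal : ∀ s ∈ Set.Ioo (0:ℝ) 1, Ac ≤ ‖x s‖ * ‖νx s‖)
    (he : e ≤ 1) :
    ⟪νx₀, v⟫ = 0 := by
  set l := nhdsWithin (0:ℝ) (Set.Ioi 0)
  have h1 : Tendsto (fun s => ⟪(s ^ (-e)) • νx s, (s ^ (2:ℝ)) • x' s⟫) l
      (nhds ⟪νx₀, -v⟫) := hνx.inner hx'
  have hpow : Tendsto (fun s : ℝ => s ^ (f + (a - 1) + (2 - e))) l (nhds 0) := by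
    have hp : 0 < f + (a - 1) + (2 - e) := by linarith
    have := (Real.continuousAt_rpow_const 0 _ (Or.inr hp.le)).tendsto
    rw [Real.zero_rpow hp.ne'] at this
    exact this.mono_left nhdsWithin_le_nhds
  have h2 : Tendsto (fun s => -((νt s / s ^ f) * (t' s / s ^ (a - 1)) *
      s ^ (f + (a - 1) + (2 - e)))) l (nhds 0) := by
    have := ((hνt.mul ht').mul hpow).neg
    simpa using this
  have hev : ∀ᶠ s in l, ⟪(s ^ (-e)) • νx s, (s ^ (2:ℝ)) • x' s⟫ =
      -((νt s / s ^ f) * (t' s / s ^ (a - 1)) * s ^ (f + (a - 1) + (2 - e))) := by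
    have hIoo : Set.Ioo (0:ℝ) 1 ∈ l :=
      Filter.inter_mem self_mem_nhdsWithin
        (mem_nhdsWithin_of_mem_nhds (Iio_mem_nhds one_pos))
    filter_upwards [hIoo] with s hs
    have hs0 : (0:ℝ) < s := hs.1
    have htan' : ⟪νx s, x' s⟫ = -(νt s * t' s) := by
      have := htan s hs; linarith
    have hfne : s ^ f ≠ 0 := (Real.rpow_pos_of_pos hs0 f).ne'
    have hane : s ^ (a - 1) ≠ 0 := (Real.rpow_pos_of_pos hs0 (a - 1)).ne'
    rw [real_inner_smul_left, real_inner_smul_right, htan']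
    rw [show f + (a - 1) + (2 - e) = f + ((a - 1) + (-e + 2)) by ring,
      Real.rpow_add hs0, Real.rpow_add hs0, Real.rpow_add hs0]
    field_simp
  have h3 : Tendsto (fun s => ⟪(s ^ (-e)) • νx s, (s ^ (2:ℝ)) • x' s⟫) l (nhds 0) :=
    h2.congr' (Filter.EventuallyEq.symm hev)
  have hl : l.NeBot := by
    simpa [l] using (nhdsGT_neBot (0:ℝ))
  have : ⟪νx₀, -v⟫ = 0 := tendsto_nhds_unique h1 h3
  rw [inner_neg_right] at this
  linarith
end

section
/- Let h : [R₀, ∞) → ℝ be a C¹ positive function and ρ : [R₀, ∞) → (0, ∞) with ρ(R) ≥ R^a for some a > 1, satisfying 0 < −h'(R) ≤ 2h(R)/ρ(R) for all R ≥ R₀. Define u(R) = 2h(R₀) − h(R). Then h is decreasing, u is increasing with u(R₀) = h(R₀) > 0 and 0 < u'(R) ≤ 2u(R)/ρ(R) for R ≥ R₀, and lim_{R→∞} u(R) ≤ h(R₀)·exp(2/((a−1)R₀^{a−1})). In particular, if R₀ is large enough that exp(2/((a−1)R₀^{a−1})) < 2, then h cannot tend to 0 at infinity while satisfying the differential inequality,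 since lim u = 2h(R₀) would be forced but lim u < 2h(R₀). -/
open Filter Set Real

/-!
Since `u = 2 h R₀ - h` dominates `h` once `h` is decreasing, the inequality `-h' ≤ 2h/ρ` gives
`u' ≤ 2 R^(-a) u`, and integrating `(log u)' ≤ 2 R^(-a)` over `[R₀, ∞)` (Gronwall) bounds `u` by
`h R₀ · exp (2 / ((a-1) R₀^(a-1)))`. If `h → 0` then `u → 2 h R₀`, which this bound forbids as soon
as the exponential factor is below `2`.
-/

section Ici

variable {f f' : ℝ → ℝ} {R₀ : ℝ}

lemma strictAntiOn_Ici_of_hasDerivAt_neg (hf : ∀ x ∈ Ici R₀, HasDerivAt f (f' x) x)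
    (hf' : ∀ x ∈ Ici R₀, f' x < 0) : StrictAntiOn f (Ici R₀) := by
  refine strictAntiOn_of_hasDerivWithinAt_neg (convex_Ici R₀) (f' := f')
    (fun x hx ↦ (hf x hx).continuousAt.continuousWithinAt) (fun x hx ↦ ?_) fun x hx ↦ ?_
  exacts [(hf x (interior_subset hx)).hasDerivWithinAt, hf' x (interior_subset hx)]

lemma antitoneOn_Ici_of_hasDerivAt_nonpos (hf : ∀ x ∈ Ici R₀, HasDerivAt f (f' x) x)
    (hf' : ∀ x ∈ Ici R₀, f' x ≤ 0) : AntitoneOn f (Ici R₀) := by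
  refine antitoneOn_of_hasDerivWithinAt_nonpos (convex_Ici R₀) (f' := f')
    (fun x hx ↦ (hf x hx).continuousAt.continuousWithinAt) (fun x hx ↦ ?_) fun x hx ↦ ?_
  exacts [(hf x (interior_subset hx)).hasDerivWithinAt, hf' x (interior_subset hx)]

end Ici

/-- Gronwall's inequality in differential form: `u' ≤ F' u` with `u > 0` makes `log u - F`
antitone. -/
theorem le_mul_exp_sub_of_hasDerivAt_le_mul {u u' F F' : ℝ → ℝ} {R₀ R : ℝ}
    (hu : ∀ x ∈ Ici R₀, HasDerivAt u (u' x) x) (hF : ∀ x ∈ Ici R₀, HasDerivAt F (F' x) x)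
    (hpos : ∀ x ∈ Ici R₀, 0 < u x) (hle : ∀ x ∈ Ici R₀, u' x ≤ F' x * u x) (hR : R₀ ≤ R) :
    u R ≤ u R₀ * exp (F R - F R₀) := by
  have hanti : AntitoneOn (fun x ↦ log (u x) - F x) (Ici R₀) := by
    refine antitoneOn_Ici_of_hasDerivAt_nonpos
      (fun x hx ↦ ((hu x hx).log (hpos x hx).ne').sub (hF x hx)) fun x hx ↦ ?_
    rw [sub_nonpos, div_le_iff₀ (hpos x hx)]
    exact hle x hx
  have hlog : log (u R) ≤ log (u R₀) + (F R - F R₀) := by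
    linarith [hanti self_mem_Ici hR hR]
  calc u R = exp (log (u R)) := (exp_log (hpos R hR)).symm
    _ ≤ exp (log (u R₀) + (F R - F R₀)) := exp_le_exp.2 hlog
    _ = u R₀ * exp (F R - F R₀) := by rw [exp_add, exp_log (hpos R₀ self_mem_Ici)]

lemma hasDerivAt_neg_rpow_one_sub_div {a x : ℝ} (ha : a ≠ 1) (hx : 0 < x) :
    HasDerivAt (fun y ↦ -y ^ (1 - a) / (a - 1)) (x ^ (-a)) x := by
  have h : HasDerivAt (fun y ↦ -y ^ (1 - a) / (a - 1)) (-((1 - a) * x ^ (1 - a - 1)) / (a - 1)) x :=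
    (hasDerivAt_rpow_const (Or.inl hx.ne')).neg.div_const (a - 1)
  convert h using 1
  rw [show 1 - a - 1 = -a by ring]
  field_simp [sub_ne_zero.2 ha]
  ring

/-- Gronwall's inequality for the integrable coefficient `c x^(-a)`, `a > 1`: its integral over
`[R₀, ∞)` is `c / ((a - 1) R₀^(a-1))`. -/
theorem le_mul_exp_of_hasDerivAt_le_rpow_mul {u u' : ℝ → ℝ} {a c R₀ R : ℝ} (ha : 1 < a)
    (hc : 0 ≤ c) (hR₀ : 0 < R₀) (hu : ∀ x ∈ Ici R₀, HasDerivAt u (u' x) x)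
    (hpos : ∀ x ∈ Ici R₀, 0 < u x) (hle : ∀ x ∈ Ici R₀, u' x ≤ c * x ^ (-a) * u x)
    (hR : R₀ ≤ R) : u R ≤ u R₀ * exp (c / ((a - 1) * R₀ ^ (a - 1))) := by
  have hF : ∀ x ∈ Ici R₀, HasDerivAt (fun y ↦ c * (-y ^ (1 - a) / (a - 1))) (c * x ^ (-a)) x :=
    fun x hx ↦ (hasDerivAt_neg_rpow_one_sub_div ha.ne' (hR₀.trans_le hx)).const_mul c
  refine (le_mul_exp_sub_of_hasDerivAt_le_mul hu hF hpos hle hR).trans ?_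
  gcongr
  · exact (hpos R₀ self_mem_Ici).le
  have ha1 : 0 < a - 1 := sub_pos.2 ha
  have hRa : 0 ≤ R ^ (1 - a) := rpow_nonneg (hR₀.le.trans hR) _
  have hR₀a : R₀ ^ (1 - a) = (R₀ ^ (a - 1))⁻¹ := by
    rw [← rpow_neg hR₀.le, neg_sub]
  calc c * (-R ^ (1 - a) / (a - 1)) - c * (-R₀ ^ (1 - a) / (a - 1))
      = c * R₀ ^ (1 - a) / (a - 1) - c * R ^ (1 - a) / (a - 1) := by ring
    _ ≤ c * R₀ ^ (1 - a) / (a - 1) := by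
        have : 0 ≤ c * R ^ (1 - a) / (a - 1) := by positivity
        linarith
    _ = c / ((a - 1) * R₀ ^ (a - 1)) := by
        rw [hR₀a]
        field_simp

theorem stmt_15_general (R₀ a : ℝ) (hR₀ : 0 < R₀) (ha : 1 < a)
    (h h' : ℝ → ℝ) (ρ : ℝ → ℝ)
    (hderiv : ∀ R, R₀ ≤ R → HasDerivAt h (h' R) R)
    (hpos : ∀ R, R₀ ≤ R → 0 < h R)
    (hρ : ∀ R, R₀ ≤ R → 0 < ρ R ∧ R ^ a ≤ ρ R)
    (hineq : ∀ R, R₀ ≤ R → 0 < -h' R ∧ -h' R ≤ 2 * h R / ρ R) :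
    (∀ R₁ R₂, R₀ ≤ R₁ → R₁ < R₂ → h R₂ < h R₁) ∧
    (∀ R₁ R₂, R₀ ≤ R₁ → R₁ < R₂ → 2 * h R₀ - h R₁ < 2 * h R₀ - h R₂) ∧
    (2 * h R₀ - h R₀ = h R₀ ∧ 0 < h R₀) ∧
    (∀ R, R₀ ≤ R → 0 < -h' R ∧ -h' R ≤ 2 * (2 * h R₀ - h R) / ρ R) ∧
    (∀ R, R₀ ≤ R →
      2 * h R₀ - h R ≤ h R₀ * Real.exp (2 / ((a - 1) * R₀ ^ (a - 1)))) ∧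
    (Real.exp (2 / ((a - 1) * R₀ ^ (a - 1))) < 2 →
      ¬ Tendsto h atTop (nhds 0)) := by
  have hanti : StrictAntiOn h (Ici R₀) :=
    strictAntiOn_Ici_of_hasDerivAt_neg hderiv fun x hx ↦ neg_pos.1 (hineq x hx).1
  have hle : ∀ R, R₀ ≤ R → h R ≤ h R₀ := fun R hR ↦ hanti.antitoneOn self_mem_Ici hR hR
  have hh₀ : 0 < h R₀ := hpos R₀ le_rfl
  have hu : ∀ R, R₀ ≤ R → 0 < -h' R ∧ -h' R ≤ 2 * (2 * h R₀ - h R) / ρ R := fun R hR ↦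
    ⟨(hineq R hR).1, (hineq R hR).2.trans <| by
      gcongr
      · exact (hρ R hR).1.le
      · linarith [hle R hR]⟩
  have hgron : ∀ R, R₀ ≤ R →
      2 * h R₀ - h R ≤ h R₀ * Real.exp (2 / ((a - 1) * R₀ ^ (a - 1))) := by
    intro R hR
    have hbound := le_mul_exp_of_hasDerivAt_le_rpow_mul (u := fun R ↦ 2 * h R₀ - h R) ha
      zero_le_two hR₀ (fun x hx ↦ (hderiv x hx).const_sub _)
      (fun x hx ↦ by linarith [hle x hx]) (fun x hx ↦ ?_) hR
    · simpa [two_mul] using hbound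
    have hx₀ : 0 < x := hR₀.trans_le hx
    calc -h' x ≤ 2 * (2 * h R₀ - h x) / ρ x := (hu x hx).2
      _ ≤ 2 * (2 * h R₀ - h x) / x ^ a := by
          gcongr
          · linarith [hle x hx]
          · exact (hρ x hx).2
      _ = 2 * x ^ (-a) * (2 * h R₀ - h x) := by rw [rpow_neg hx₀.le]; ring
  refine ⟨fun R₁ R₂ h₁ h₁₂ ↦ hanti h₁ (h₁.trans h₁₂.le) h₁₂,
    fun R₁ R₂ h₁ h₁₂ ↦ sub_lt_sub_left (hanti h₁ (h₁.trans h₁₂.le) h₁₂) _,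
    ⟨by ring, hh₀⟩, hu, hgron, fun hexp hlim ↦ ?_⟩
  have hlim' : Tendsto (fun R ↦ 2 * h R₀ - h R) atTop (nhds (2 * h R₀ - 0)) :=
    tendsto_const_nhds.sub hlim
  have : 2 * h R₀ - 0 ≤ h R₀ * Real.exp (2 / ((a - 1) * R₀ ^ (a - 1))) :=
    le_of_tendsto hlim' (eventually_ge_atTop R₀ |>.mono hgron)
  nlinarith

/-- Gronwall contradiction in the finiteness proof for asymptotic critical values:
if `h > 0` is `C¹` on `[R₀, ∞)` with `0 < -h' ≤ 2h/ρ` where `ρ R ≥ R^a`, `a > 1`,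
and `u := 2 h R₀ - h`, then `h` is antitone, `u` is monotone with `u R₀ = h R₀ > 0`
and `0 < u' ≤ 2u/ρ`, and `u ≤ h R₀ · exp (2/((a-1) R₀^(a-1)))` everywhere; in
particular if `exp (2/((a-1) R₀^(a-1))) < 2` then `h` cannot tend to `0` at
infinity. -/
theorem stmt_15 (R₀ a : ℝ) (hR₀ : 0 < R₀) (ha : 1 < a)
    (h h' : ℝ → ℝ) (ρ : ℝ → ℝ)
    (hderiv : ∀ R, R₀ ≤ R → HasDerivAt h (h' R) R)
    (hcont : ContinuousOn h' (Set.Ici R₀))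
    (hpos : ∀ R, R₀ ≤ R → 0 < h R)
    (hρ : ∀ R, R₀ ≤ R → 0 < ρ R ∧ R ^ a ≤ ρ R)
    (hineq : ∀ R, R₀ ≤ R → 0 < -h' R ∧ -h' R ≤ 2 * h R / ρ R) :
    (∀ R₁ R₂, R₀ ≤ R₁ → R₁ < R₂ → h R₂ < h R₁) ∧
    (∀ R₁ R₂, R₀ ≤ R₁ → R₁ < R₂ → 2 * h R₀ - h R₁ < 2 * h R₀ - h R₂) ∧
    (2 * h R₀ - h R₀ = h R₀ ∧ 0 < h R₀) ∧
    (∀ R, R₀ ≤ R → 0 < -h' R ∧ -h' R ≤ 2 * (2 * h R₀ - h R) / ρ R) ∧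
    (∀ R, R₀ ≤ R →
      2 * h R₀ - h R ≤ h R₀ * Real.exp (2 / ((a - 1) * R₀ ^ (a - 1)))) ∧
    (Real.exp (2 / ((a - 1) * R₀ ^ (a - 1))) < 2 →
      ¬ Tendsto h atTop (nhds 0)) :=
  stmt_15_general R₀ a hR₀ ha h h' ρ hderiv hpos hρ hineq
end
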